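/- arXiv:2511.15588 — 3 statements merged into one kernel-verified Lean document; each statement's English description precedes it below -/
import Mathlib

section
/- Degree elevation identity: let a < b be reals, let N < N_e be natural numbers, and let p_0,…,p_N be control points in ℝ^d. Define the elevation matrix E ∈ ℝ^{(N+1)×(N_e+1)} by e_{i,i+j} = (N_e−N choose j)(N choose i)/(N_e choose i+j) for 0 ≤ i ≤ N and 0 ≤ j ≤ N_e−N, and all other entries zero, and set q_m = ∑_{i=0}^{N} e_{i,m} p_i for m = 0,…,N_e. Then for every t ∈ ℝ, ∑_{i=0}^{N} p_i b_{i,N}(t) = ∑_{m=0}^{N_e} q_m b_{m,N_e}(t), where b_{i,N} and b_{m,N_e} are the Bernstein basis polynomials on [a,b] of degrees N and N_e respectively. -/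
/-- The `j`-th Bernstein basis polynomial of degree `N` on the interval `[a, b]`. -/
noncomputable def bern (a b : ℝ) (N j : ℕ) (t : ℝ) : ℝ :=
  (N.choose j : ℝ) * (t - a) ^ j * (b - t) ^ (N - j) / (b - a) ^ N

/-- Entry `(i, m)` of the degree elevation matrix from degree `N` to degree `Ne`:
`e_{i, i+j} = ((Ne - N).choose j * N.choose i) / Ne.choose (i + j)` for
`0 ≤ j ≤ Ne - N` (i.e. `i ≤ m` and `m - i ≤ Ne - N`), and `0` otherwise. -/
noncomputable def elev (N Ne : ℕ) (i m : ℕ) : ℝ :=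
  if i ≤ m ∧ m - i ≤ Ne - N then
    ((Ne - N).choose (m - i) : ℝ) * (N.choose i : ℝ) / (Ne.choose m : ℝ)
  else 0

lemma bern_elev_key (a b : ℝ) (hab : a < b) (N Ne : ℕ) (hNe : N < Ne) (t : ℝ)
    (i : ℕ) (hi : i ≤ N) :
    ∑ m ∈ Finset.range (Ne + 1), elev N Ne i m * bern a b Ne m t = bern a b N i t := by
  have hc : (b - a) ≠ 0 := sub_ne_zero.mpr hab.ne'
  set K := Ne - N with hKdef
  have hK : N + K = Ne := by omega
  -- restrict the sum to the support
  have hsub : Finset.Ico i (i + K + 1) ⊆ Finset.range (Ne + 1) := by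
    intro x hx
    simp only [Finset.mem_Ico, Finset.mem_range] at hx ⊢
    omega
  have hvanish : ∀ x ∈ Finset.range (Ne + 1), x ∉ Finset.Ico i (i + K + 1) →
      elev N Ne i x * bern a b Ne x t = 0 := by
    intro x _ hx
    simp only [Finset.mem_Ico, not_and, not_lt] at hx
    have : elev N Ne i x = 0 := by
      rw [elev, if_neg]
      intro h
      omega
    rw [this, zero_mul]
  rw [← Finset.sum_subset hsub hvanish, Finset.sum_Ico_eq_sum_range]
  have hrange : i + K + 1 - i = K + 1 := by omega
  rw [hrange]
  -- rewrite each term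
  have hterm : ∀ j ∈ Finset.range (K + 1),
      elev N Ne i (i + j) * bern a b Ne (i + j) t =
        ((N.choose i : ℝ) * (t - a) ^ i * (b - t) ^ (N - i) / (b - a) ^ Ne) *
          ((K.choose j : ℝ) * (t - a) ^ j * (b - t) ^ (K - j)) := by
    intro j hj
    have hjK : j ≤ K := by
      simpa [Nat.lt_succ_iff] using Finset.mem_range.mp hj
    have hcond : i ≤ i + j ∧ (i + j) - i ≤ Ne - N := by
      constructor
      · omega
      · omega
    have hchoose : (Ne.choose (i + j) : ℝ) ≠ 0 := by
      exact_mod_cast (Nat.choose_pos (by omega : i + j ≤ Ne)).ne'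
    rw [elev, if_pos hcond, bern]
    have h1 : (i + j) - i = j := by omega
    have h2 : Ne - (i + j) = (N - i) + (K - j) := by omega
    rw [h1, h2, pow_add, pow_add]
    field_simp
    ring
  rw [Finset.sum_congr rfl hterm, ← Finset.mul_sum]
  have hbin : ∑ j ∈ Finset.range (K + 1),
      (K.choose j : ℝ) * (t - a) ^ j * (b - t) ^ (K - j) = (b - a) ^ K := by
    have := add_pow (t - a) (b - t) K
    have hba : (t - a) + (b - t) = b - a := by ring
    rw [hba] at this
    rw [this]
    apply Finset.sum_congr rfl
    intro j _
    ring
  rw [hbin, bern]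
  have hpow : (b - a) ^ Ne = (b - a) ^ N * (b - a) ^ K := by
    rw [← pow_add, hK]
  rw [hpow]
  field_simp

/-- Degree elevation identity: the degree-`N` Bernstein polynomial with control points
`p` equals the degree-`Ne` Bernstein polynomial with the elevated control points
`q m = ∑ i, elev N Ne i m • p i`, for every `t ∈ ℝ`. -/
theorem bern_degree_elevation_identity (a b : ℝ) (hab : a < b) (N Ne d : ℕ)
    (hNe : N < Ne) (p : Fin (N + 1) → EuclideanSpace ℝ (Fin d)) (t : ℝ) :
    ∑ i : Fin (N + 1), bern a b N i t • p i =
      ∑ m : Fin (Ne + 1), bern a b Ne m t •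
        ∑ i : Fin (N + 1), elev N Ne i m • p i := by
  have key : ∀ i : Fin (N + 1),
      ∑ m : Fin (Ne + 1), elev N Ne i m * bern a b Ne m t = bern a b N i t := by
    intro i
    rw [Fin.sum_univ_eq_sum_range (fun m => elev N Ne i m * bern a b Ne m t) (Ne + 1)]
    exact bern_elev_key a b hab N Ne hNe t i (by omega : (i : ℕ) ≤ N)
  calc ∑ i : Fin (N + 1), bern a b N i t • p i
      = ∑ i : Fin (N + 1), (∑ m : Fin (Ne + 1), elev N Ne i m * bern a b Ne m t) • p i := by
        simp_rw [key]
    _ = ∑ i : Fin (N + 1), ∑ m : Fin (Ne + 1), (elev N Ne i m * bern a b Ne m t) • p i := by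
        simp_rw [Finset.sum_smul]
    _ = ∑ m : Fin (Ne + 1), ∑ i : Fin (N + 1), (elev N Ne i m * bern a b Ne m t) • p i :=
        Finset.sum_comm
    _ = ∑ m : Fin (Ne + 1), bern a b Ne m t • ∑ i : Fin (N + 1), elev N Ne i m • p i := by
        apply Finset.sum_congr rfl
        intro m _
        rw [Finset.smul_sum]
        apply Finset.sum_congr rfl
        intro i _
        rw [smul_smul, mul_comm]
end

section
/- Stochasticity of the elevation matrix: let N < N_e be natural numbers and define E ∈ ℝ^{(N+1)×(N_e+1)} by e_{i,i+j} = (N_e−N choose j)(N choose i)/(N_e choose i+j) for 0 ≤ i ≤ N and 0 ≤ j ≤ N_e−N, and all other entries zero. Then every entry of E is nonnegative, and every column of E sums to one: for each m = 0,…,N_e, ∑_{i=0}^{N} e_{i,m} = 1. -/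
lemma elev_sum_nat (N Ne m : ℕ) (hNe : N ≤ Ne) (hm : m ≤ Ne) :
    ∑ i ∈ Finset.range (N + 1),
      (if i ≤ m ∧ m - i ≤ Ne - N then (Ne - N).choose (m - i) * N.choose i else 0)
      = Ne.choose m := by
  set K := Ne - N with hK
  have hNK : N + K = Ne := by omega
  have h1 : ∀ i ∈ Finset.range (Ne + 1), i ∉ Finset.range (N + 1) →
      (if i ≤ m ∧ m - i ≤ K then K.choose (m - i) * N.choose i else 0) = 0 := by
    intro i _ hi
    simp only [Finset.mem_range, not_lt] at hi
    have : N.choose i = 0 := Nat.choose_eq_zero_of_lt (by omega)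
    simp [this]
  rw [Finset.sum_subset (Finset.range_subset_range.mpr (by omega)) h1]
  have h2 : ∀ i ∈ Finset.range (Ne + 1), i ∉ Finset.range (m + 1) →
      (if i ≤ m ∧ m - i ≤ K then K.choose (m - i) * N.choose i else 0) = 0 := by
    intro i _ hi
    simp only [Finset.mem_range, not_lt] at hi
    rw [if_neg (by omega)]
  rw [← Finset.sum_subset (Finset.range_subset_range.mpr (by omega)) h2]
  have h3 : ∀ i ∈ Finset.range (m + 1),
      (if i ≤ m ∧ m - i ≤ K then K.choose (m - i) * N.choose i else 0)
        = N.choose i * K.choose (m - i) := by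
    intro i hi
    simp only [Finset.mem_range] at hi
    by_cases hc : m - i ≤ K
    · rw [if_pos ⟨by omega, hc⟩, Nat.mul_comm]
    · rw [if_neg fun h => hc h.2, Nat.choose_eq_zero_of_lt (show K < m - i by omega),
        Nat.mul_zero]
  rw [Finset.sum_congr rfl h3, ← hNK, Nat.add_choose_eq,
    Finset.Nat.sum_antidiagonal_eq_sum_range_succ_mk]

/-- Stochasticity of the degree elevation matrix: all entries are nonnegative and
every column sums to one. -/
theorem elev_nonneg_and_column_sum_one (N Ne : ℕ) (hNe : N < Ne) :
    (∀ (i : Fin (N + 1)) (m : Fin (Ne + 1)), 0 ≤ elev N Ne i m) ∧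
      ∀ m : Fin (Ne + 1), ∑ i : Fin (N + 1), elev N Ne i m = 1 := by
  constructor
  · intro i m
    unfold elev
    split
    · positivity
    · exact le_refl 0
  · intro m
    have hm : (m : ℕ) ≤ Ne := Nat.lt_succ_iff.mp m.isLt
    have hD : (Ne.choose m : ℝ) ≠ 0 := by
      exact_mod_cast Nat.choose_pos hm |>.ne'
    have key := elev_sum_nat N Ne m hNe.le hm
    have : ∑ i : Fin (N + 1), elev N Ne i m
        = (∑ i ∈ Finset.range (N + 1),
            (if (i : ℕ) ≤ (m : ℕ) ∧ (m : ℕ) - i ≤ Ne - N then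
              ((Ne - N).choose ((m : ℕ) - i) * N.choose i : ℕ) else 0) : ℕ)
            / (Ne.choose m : ℝ) := by
      rw [Nat.cast_sum, Finset.sum_div, ← Fin.sum_univ_eq_sum_range]
      refine Finset.sum_congr rfl fun i _ => ?_
      unfold elev
      split
      · push_cast; ring
      · simp
    rw [this, key, div_self hD]
end

section
/- Hull refinement under degree elevation: let N < N_e be natural numbers, p_0,…,p_N control points in ℝ^d, and q_m = ∑_{i=0}^{N} e_{i,m} p_i for m = 0,…,N_e the degree-elevated control points, where e_{i,m} are the entries of the degree elevation matrix from N to N_e. Then every elevated control point q_m lies in convexHull {p_0,…,p_N}; consequently convexHull {q_0,…,q_{N_e}} ⊆ convexHull {p_0,…,p_N}. -/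
lemma elev_nonneg (N Ne i m : ℕ) : 0 ≤ elev N Ne i m := by
  unfold elev
  split_ifs with h
  · positivity
  · exact le_refl 0

lemma elev_key_nat (N Ne m : ℕ) (hN : N ≤ Ne) :
    ∑ i ∈ Finset.range (N + 1),
      (if i ≤ m then (Ne - N).choose (m - i) * N.choose i else 0) = Ne.choose m := by
  have h1 : Ne.choose m = ∑ i ∈ Finset.range (m + 1), N.choose i * (Ne - N).choose (m - i) := by
    conv_lhs => rw [← Nat.add_sub_cancel' hN]
    rw [Nat.add_choose_eq,
      Finset.Nat.sum_antidiagonal_eq_sum_range_succ (fun a b => N.choose a * (Ne - N).choose b)]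
  rw [h1]
  have h2 : ∀ i ∈ Finset.range (m + 1), N.choose i * (Ne - N).choose (m - i)
      = (if i ≤ m then (Ne - N).choose (m - i) * N.choose i else 0) := by
    intro i hi
    rw [if_pos (Nat.lt_succ_iff.mp (Finset.mem_range.mp hi)), Nat.mul_comm]
  rw [Finset.sum_congr rfl h2]
  -- extend both sums to range (max N m + 1)
  rw [Finset.sum_subset (Finset.range_subset_range.2 (Nat.succ_le_succ (le_max_right N m)))
      (fun i _ hi => by
        rw [Finset.mem_range, Nat.lt_succ_iff, not_le] at hi
        rw [if_neg (by omega)]),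
    ← Finset.sum_subset (Finset.range_subset_range.2 (Nat.succ_le_succ (le_max_left N m)))
      (fun i _ hi => by
        rw [Finset.mem_range, Nat.lt_succ_iff, not_le] at hi
        split_ifs with h
        · rw [Nat.choose_eq_zero_of_lt hi, Nat.mul_zero]
        · rfl)]

lemma elev_sum_one (N Ne m : ℕ) (hN : N ≤ Ne) (hm : m ≤ Ne) :
    ∑ i ∈ Finset.range (N + 1), elev N Ne i m = 1 := by
  have hc : (0 : ℝ) < (Ne.choose m : ℝ) := by
    exact_mod_cast Nat.choose_pos hm
  have hterm : ∀ i ∈ Finset.range (N + 1), elev N Ne i m =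
      ((if i ≤ m then (Ne - N).choose (m - i) * N.choose i else 0 : ℕ) : ℝ) /
        (Ne.choose m : ℝ) := by
    intro i _
    unfold elev
    split_ifs with h1 h2 h2
    · push_cast; ring
    · -- i ≤ m ∧ m - i ≤ Ne - N, but ¬ i ≤ m : contradiction
      exact absurd h1.1 h2
    · -- ¬(i ≤ m ∧ m - i ≤ Ne - N) but i ≤ m, so m - i > Ne - N, choose is 0
      have : Ne - N < m - i := by omega
      rw [Nat.choose_eq_zero_of_lt this]
      simp
    · simp
  rw [Finset.sum_congr rfl hterm, ← Finset.sum_div, ← Nat.cast_sum,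
    elev_key_nat N Ne m hN, div_self (ne_of_gt hc)]

/-- Hull refinement under degree elevation: each elevated control point
`q m = ∑ i, elev N Ne i m • p i` lies in the convex hull of the original control
points; consequently the convex hull of the elevated control points is contained in
the convex hull of the original ones. -/
theorem elev_hull_refinement (N Ne d : ℕ) (hNe : N < Ne)
    (p : Fin (N + 1) → EuclideanSpace ℝ (Fin d)) :
    (∀ m : Fin (Ne + 1),
        (∑ i : Fin (N + 1), elev N Ne i m • p i) ∈ convexHull ℝ (Set.range p)) ∧
      convexHull ℝ
          (Set.range fun m : Fin (Ne + 1) => ∑ i : Fin (N + 1), elev N Ne i m • p i) ⊆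
        convexHull ℝ (Set.range p) := by
  have hmem : ∀ m : Fin (Ne + 1),
      (∑ i : Fin (N + 1), elev N Ne i m • p i) ∈ convexHull ℝ (Set.range p) := by
    intro m
    apply (convex_convexHull ℝ (Set.range p)).sum_mem
    · intro i _
      exact elev_nonneg N Ne i m
    · rw [Fin.sum_univ_eq_sum_range (fun i => elev N Ne i m)]
      exact elev_sum_one N Ne m hNe.le (Nat.lt_succ_iff.mp m.isLt)
    · intro i _
      exact subset_convexHull ℝ (Set.range p) ⟨i, rfl⟩
  exact ⟨hmem, convexHull_min (Set.range_subset_iff.2 hmem)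
    (convex_convexHull ℝ (Set.range p))⟩
end
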